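/- arXiv:2410.17203 — 2 statements merged into one kernel-verified Lean document; each statement's English description precedes it below -/
import Mathlib

section
/- Invariance of the scaled dual iterates in proximal message passing: let u, v, p, θ : ℕ → (Fin J → ℝ) be sequences satisfying the scaled price updates u^{(i+1)} = u^{(i)} + A p^{(i+1)} and v^{(i+1)} = v^{(i)} + R θ^{(i+1)} for all i. If R u^{(0)} = 0 and A v^{(0)} = 0, then R u^{(i)} = 0 and A v^{(i)} = 0 for every i ∈ ℕ. -/
open Finset

/-- The node-average operator: `(nodeAvg ν z) j` is the average of `z` over all terminals
assigned to the same node as terminal `j`. -/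
noncomputable def nodeAvg {J N : ℕ} (ν : Fin J → Fin N) (z : Fin J → ℝ) : Fin J → ℝ :=
  fun j => (∑ j' ∈ univ.filter (fun j' => ν j' = ν j), z j') /
    ((univ.filter (fun j' : Fin J => ν j' = ν j)).card : ℝ)

/-- The node-residual operator: `nodeResid ν z = z - nodeAvg ν z`. -/
noncomputable def nodeResid {J N : ℕ} (ν : Fin J → Fin N) (z : Fin J → ℝ) : Fin J → ℝ :=
  fun j => z j - nodeAvg ν z j

/-! A and R = id - A are complementary linear projections, so A maps into ker R and R maps
into ker A; both kernels are closed under addition, which is all the induction needs. -/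

section

variable {J N : ℕ} (ν : Fin J → Fin N)

lemma nodeResid_eq_sub (z : Fin J → ℝ) : nodeResid ν z = z - nodeAvg ν z := rfl

lemma nodeAvg_add (x y : Fin J → ℝ) : nodeAvg ν (x + y) = nodeAvg ν x + nodeAvg ν y := by
  funext j
  simp only [nodeAvg, Pi.add_apply, sum_add_distrib, add_div]

lemma nodeAvg_sub (x y : Fin J → ℝ) : nodeAvg ν (x - y) = nodeAvg ν x - nodeAvg ν y := by
  funext j
  simp only [nodeAvg, Pi.sub_apply, sum_sub_distrib, sub_div]

lemma nodeResid_add (x y : Fin J → ℝ) :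
    nodeResid ν (x + y) = nodeResid ν x + nodeResid ν y := by
  simp only [nodeResid_eq_sub, nodeAvg_add]
  abel

lemma nodeAvg_apply_eq_of_eq {j j' : Fin J} (h : ν j' = ν j) (z : Fin J → ℝ) :
    nodeAvg ν z j' = nodeAvg ν z j := by
  simp only [nodeAvg, h]

lemma nodeAvg_nodeAvg (z : Fin J → ℝ) : nodeAvg ν (nodeAvg ν z) = nodeAvg ν z := by
  funext j
  have hcard : (#(univ.filter fun j' => ν j' = ν j) : ℝ) ≠ 0 :=
    Nat.cast_ne_zero.mpr (card_ne_zero_of_mem (mem_filter.mpr ⟨mem_univ j, rfl⟩))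
  have hconst : ∀ j' ∈ univ.filter (fun j' => ν j' = ν j), nodeAvg ν z j' = nodeAvg ν z j :=
    fun j' hj' => nodeAvg_apply_eq_of_eq ν (mem_filter.mp hj').2 z
  rw [nodeAvg, sum_congr rfl hconst, sum_const, nsmul_eq_mul, mul_div_cancel_left₀ _ hcard]

lemma nodeResid_nodeAvg (z : Fin J → ℝ) : nodeResid ν (nodeAvg ν z) = 0 := by
  rw [nodeResid_eq_sub, nodeAvg_nodeAvg, sub_self]

lemma nodeAvg_nodeResid (z : Fin J → ℝ) : nodeAvg ν (nodeResid ν z) = 0 := by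
  rw [nodeResid_eq_sub, nodeAvg_sub, nodeAvg_nodeAvg, sub_self]

end

theorem dual_invariance_message_passing_general {J N : ℕ}
    (ν : Fin J → Fin N) (u v p θ : ℕ → Fin J → ℝ)
    (hu : ∀ i : ℕ, u (i + 1) = u i + nodeAvg ν (p (i + 1)))
    (hv : ∀ i : ℕ, v (i + 1) = v i + nodeResid ν (θ (i + 1)))
    (hu0 : nodeResid ν (u 0) = 0) (hv0 : nodeAvg ν (v 0) = 0) :
    ∀ i : ℕ, nodeResid ν (u i) = 0 ∧ nodeAvg ν (v i) = 0 := by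
  intro i
  induction i with
  | zero => exact ⟨hu0, hv0⟩
  | succ n ih =>
    obtain ⟨ihu, ihv⟩ := ih
    constructor
    · rw [hu n, nodeResid_add, ihu, nodeResid_nodeAvg, add_zero]
    · rw [hv n, nodeAvg_add, ihv, nodeAvg_nodeResid, add_zero]

/-- Invariance of the scaled dual iterates in proximal message passing: if the scaled price
updates are `u (i+1) = u i + A (p (i+1))` and `v (i+1) = v i + R (θ (i+1))`, and initially
`R (u 0) = 0` and `A (v 0) = 0`, then `R (u i) = 0` and `A (v i) = 0` for every `i`. -/
theorem dual_invariance_message_passing {J N : ℕ} (hJ : 0 < J) (hN : 0 < N)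
    (ν : Fin J → Fin N) (u v p θ : ℕ → Fin J → ℝ)
    (hu : ∀ i : ℕ, u (i + 1) = u i + nodeAvg ν (p (i + 1)))
    (hv : ∀ i : ℕ, v (i + 1) = v i + nodeResid ν (θ (i + 1)))
    (hu0 : nodeResid ν (u 0) = 0) (hv0 : nodeAvg ν (v 0) = 0) :
    ∀ i : ℕ, nodeResid ν (u i) = 0 ∧ nodeAvg ν (v i) = 0 :=
  dual_invariance_message_passing_general ν u v p θ hu hv hu0 hv0
end

section
/- Closed form of the AC transmission line proximal operator (single time period): let b ≠ 0, u ≥ 0, ρ_p > 0, ρ_θ > 0, and z₁, z₂, ξ₁, ξ₂ ∈ ℝ. Consider minimizing F(p₁, p₂, θ₁, θ₂) = (ρ_p/2)((p₁ − z₁)² + (p₂ − z₂)²) + (ρ_θ/2)((θ₁ − ξ₁)² + (θ₂ − ξ₂)²) over the constraint set {(p₁, p₂, θ₁, θ₂) ∈ ℝ⁴ : p₁ + p₂ = 0, p₂ = b(θ₁ − θ₂), −u ≤ p₂ ≤ u}. Then F attains a unique minimum on this set, at the point given by p₂* = min(max( (ρ_p (z₂ − z₁) + ρ_θ (ξ₁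 − ξ₂)/(2b)) / (2(ρ_p + ρ_θ/(4b²))), −u), u), p₁* = −p₂*, θ₂* = (ξ₁ + ξ₂)/2 − p₂*/(2b), and θ₁* = θ₂* + p₂*/b. -/
/-!
On the constraint set `p₁ = -p₂` and `θ₁ = θ₂ + p₂ / b`, so the objective is a function of
`(p₂, θ₂)`. Completing the square writes it as
`K (p₂ - m)² + ρθ (θ₂ - (ξ₁ + ξ₂)/2 + p₂/(2b))² + const` with `K = ρp + ρθ/(4b²) > 0`, where `m`
is the unconstrained minimiser in `p₂`. The second square vanishes exactly at `θ₂s`, and over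
`[-u, u]` the first is uniquely minimised by the clamp `c` of `m`, since projecting onto an
interval satisfies `(x - c)² + (c - m)² ≤ (x - m)²`.
-/

section Clamp

variable {lo hi m x : ℝ}

theorem mul_sub_clamp_nonneg (hlo : lo ≤ x) (hhi : x ≤ hi) :
    0 ≤ (x - min (max m lo) hi) * (min (max m lo) hi - m) := by
  rcases le_total m lo with hm | hm
  · rw [max_eq_right hm, min_eq_left (hlo.trans hhi)]
    exact mul_nonneg (by linarith) (by linarith)
  rcases le_total m hi with hm' | hm'
  · rw [max_eq_left hm, min_eq_left hm']
    simp
  · rw [min_eq_right (le_max_of_le_left hm')]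
    exact mul_nonneg_of_nonpos_of_nonpos (by linarith) (by linarith)

theorem sq_sub_clamp_add_sq_le (hlo : lo ≤ x) (hhi : x ≤ hi) :
    (x - min (max m lo) hi) ^ 2 + (min (max m lo) hi - m) ^ 2 ≤ (x - m) ^ 2 := by
  nlinarith [mul_sub_clamp_nonneg (m := m) hlo hhi]

theorem clamp_sq_le_add_sq_and_eq {K ρ : ℝ} (hK : 0 < K) (hρ : 0 < ρ) (hlo : lo ≤ x)
    (hhi : x ≤ hi) (y : ℝ) :
    K * (min (max m lo) hi - m) ^ 2 ≤ K * (x - m) ^ 2 + ρ * y ^ 2 ∧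
      (K * (x - m) ^ 2 + ρ * y ^ 2 = K * (min (max m lo) hi - m) ^ 2 →
        x = min (max m lo) hi ∧ y = 0) := by
  have hgap := mul_le_mul_of_nonneg_left (sq_sub_clamp_add_sq_le (m := m) hlo hhi) hK.le
  have hx : 0 ≤ K * (x - min (max m lo) hi) ^ 2 := by positivity
  have hy : 0 ≤ ρ * y ^ 2 := by positivity
  refine ⟨by linarith, fun heq => ?_⟩
  have h0 : K * (x - min (max m lo) hi) ^ 2 + ρ * y ^ 2 = 0 := by linarith
  simpa [add_eq_zero_iff_of_nonneg hx hy, hK.ne', hρ.ne', sub_eq_zero] using h0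

end Clamp

section LineObjective

variable {b ρp ρθ z₁ z₂ ξ₁ ξ₂ m : ℝ}

theorem line_objective_eq_sum_sq (hb : b ≠ 0)
    (hm : 2 * (ρp + ρθ / (4 * b ^ 2)) * m = ρp * (z₂ - z₁) + ρθ * (ξ₁ - ξ₂) / (2 * b)) :
    ∃ c : ℝ, ∀ P T : ℝ,
      ρp / 2 * ((-P - z₁) ^ 2 + (P - z₂) ^ 2) + ρθ / 2 * ((T + P / b - ξ₁) ^ 2 + (T - ξ₂) ^ 2)
        = (ρp + ρθ / (4 * b ^ 2)) * (P - m) ^ 2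
          + ρθ * (T - ((ξ₁ + ξ₂) / 2 - P / (2 * b))) ^ 2 + c := by
  refine ⟨ρp / 2 * ((-m - z₁) ^ 2 + (m - z₂) ^ 2)
    + ρθ / 2 * (((ξ₁ + ξ₂) / 2 + m / (2 * b) - ξ₁) ^ 2 + ((ξ₁ + ξ₂) / 2 - m / (2 * b) - ξ₂) ^ 2),
    fun P T => ?_⟩
  field_simp at hm ⊢
  linear_combination 4 * (P - m) * hm

end LineObjective

/-- Closed form of the AC transmission line proximal operator (single time period):
the quadratic objective attains a unique minimum over the DC line constraint set
`{(p₁, p₂, θ₁, θ₂) | p₁ + p₂ = 0, p₂ = b (θ₁ - θ₂), -u ≤ p₂ ≤ u}` at the stated point. -/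
theorem ac_line_prox_closed_form (b u ρp ρθ : ℝ) (hb : b ≠ 0) (hu : 0 ≤ u)
    (hρp : 0 < ρp) (hρθ : 0 < ρθ) (z₁ z₂ ξ₁ ξ₂ : ℝ) :
    let F : ℝ → ℝ → ℝ → ℝ → ℝ := fun p₁ p₂ θ₁ θ₂ =>
      ρp / 2 * ((p₁ - z₁) ^ 2 + (p₂ - z₂) ^ 2) + ρθ / 2 * ((θ₁ - ξ₁) ^ 2 + (θ₂ - ξ₂) ^ 2)
    let C : ℝ → ℝ → ℝ → ℝ → Prop := fun p₁ p₂ θ₁ θ₂ =>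
      p₁ + p₂ = 0 ∧ p₂ = b * (θ₁ - θ₂) ∧ -u ≤ p₂ ∧ p₂ ≤ u
    let p₂s : ℝ := min (max ((ρp * (z₂ - z₁) + ρθ * (ξ₁ - ξ₂) / (2 * b)) /
      (2 * (ρp + ρθ / (4 * b ^ 2)))) (-u)) u
    let p₁s : ℝ := -p₂s
    let θ₂s : ℝ := (ξ₁ + ξ₂) / 2 - p₂s / (2 * b)
    let θ₁s : ℝ := θ₂s + p₂s / b
    C p₁s p₂s θ₁s θ₂s ∧
    ∀ p₁ p₂ θ₁ θ₂ : ℝ, C p₁ p₂ θ₁ θ₂ →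
      F p₁s p₂s θ₁s θ₂s ≤ F p₁ p₂ θ₁ θ₂ ∧
      (F p₁ p₂ θ₁ θ₂ = F p₁s p₂s θ₁s θ₂s → (p₁, p₂, θ₁, θ₂) = (p₁s, p₂s, θ₁s, θ₂s)) := by
  intro F C p₂s p₁s θ₂s θ₁s
  have hK : 0 < ρp + ρθ / (4 * b ^ 2) := by positivity
  set m := (ρp * (z₂ - z₁) + ρθ * (ξ₁ - ξ₂) / (2 * b)) / (2 * (ρp + ρθ / (4 * b ^ 2))) with hm
  have hm' : 2 * (ρp + ρθ / (4 * b ^ 2)) * m = ρp * (z₂ - z₁) + ρθ * (ξ₁ - ξ₂) / (2 * b) := by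
    rw [hm]; field_simp
  obtain ⟨c, hF⟩ := line_objective_eq_sum_sq hb hm'
  have hp₂s : -u ≤ p₂s ∧ p₂s ≤ u := ⟨le_min (le_max_right _ _) (by linarith), min_le_right _ _⟩
  refine ⟨⟨neg_add_cancel _, by simp only [θ₁s]; field_simp; ring, hp₂s⟩, ?_⟩
  rintro p₁ p₂ θ₁ θ₂ ⟨hp₁, hθ₁, hlo, hhi⟩
  obtain rfl : p₁ = -p₂ := by linarith
  obtain rfl : θ₁ = θ₂ + p₂ / b := by field_simp; linarith
  have hFs : F p₁s p₂s θ₁s θ₂s = (ρp + ρθ / (4 * b ^ 2)) * (p₂s - m) ^ 2 + c := by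
    rw [show F p₁s p₂s θ₁s θ₂s = _ from hF p₂s θ₂s, show θ₂s - _ = 0 from sub_self _]
    ring
  have hF₀ : F (-p₂) p₂ (θ₂ + p₂ / b) θ₂ = _ := hF p₂ θ₂
  obtain ⟨hle, huniq⟩ :=
    clamp_sq_le_add_sq_and_eq (m := m) hK hρθ hlo hhi (θ₂ - ((ξ₁ + ξ₂) / 2 - p₂ / (2 * b)))
  rw [hFs, hF₀]
  refine ⟨by linarith, fun heq => ?_⟩
  obtain ⟨rfl, hθ⟩ := huniq (by linarith)
  obtain rfl : θ₂ = θ₂s := sub_eq_zero.mp hθ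
  rfl
end
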